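/- arXiv:1508.05853 — 2 statements merged into one kernel-verified Lean document; each statement's English description precedes it below -/
import Mathlib

section
/- Let χ : ℝ⁴ → ℝ be smooth and set v_μ := ∂_μ χ, with Minkowski norm N := η^{μν} v_μ v_ν assumed strictly positive everywhere. Define β := (1 − N)/N² and the dragged metric ĝ^{μν} := η^{μν} + β v^μ v^ν (so that N(1 + βN) = 1). Then: (i) v_μ is normalized in ĝ, i.e. ĝ^{μν} v_μ v_ν = 1; and (ii) v_μ satisfies the geodesic equation of ĝ: (∂_ν v_μ − Γ̂^ε_{μν} v_ε) v̂^ν = 0 everywhere, where v̂^ν := ĝ^{νρ} v_ρ and Γ̂^ε_{μν} are the Christoffel symbols of the covariant metric ĝ_{μν} (the inverse matrix of ĝ^{μν}). -/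
open scoped BigOperators
open Matrix

noncomputable section

/-- The Minkowski metric η = diag(1,-1,-1,-1) (same components for η_{μν} and η^{μν}). -/
def η (μ ν : Fin 4) : ℝ := if μ = ν then (if μ = 0 then 1 else -1) else 0

/-- Partial derivative ∂_μ of a real-valued function on ℝ⁴ (Cartesian coordinates). -/
def pd (μ : Fin 4) (f : (Fin 4 → ℝ) → ℝ) (x : Fin 4 → ℝ) : ℝ :=
  fderiv ℝ f x (Pi.single μ 1)

/-- Christoffel symbols Γ^σ_{μν} = ½ g^{σρ}(∂_ν g_{ρμ} + ∂_μ g_{ρν} − ∂_ρ g_{μν})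
of a metric with covariant components `g` and contravariant components `ginv`. -/
def christoffel (ginv g : (Fin 4 → ℝ) → Fin 4 → Fin 4 → ℝ)
    (x : Fin 4 → ℝ) (σ μ ν : Fin 4) : ℝ :=
  (1 / 2) * ∑ ρ, ginv x σ ρ *
    (pd ν (fun y => g y ρ μ) x + pd μ (fun y => g y ρ ν) x - pd ρ (fun y => g y μ ν) x)

section Helpers

variable {f g : (Fin 4 → ℝ) → ℝ} {x : Fin 4 → ℝ} {μ : Fin 4}

lemma pd_const_add (c : ℝ) (f : (Fin 4 → ℝ) → ℝ) (μ : Fin 4) (x : Fin 4 → ℝ) :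
    pd μ (fun y => c + f y) x = pd μ f x := by simp [pd, fderiv_const_add]

lemma pd_sub (hf : DifferentiableAt ℝ f x) (hg : DifferentiableAt ℝ g x) :
    pd μ (fun y => f y - g y) x = pd μ f x - pd μ g x := by
  simp [pd, fderiv_fun_sub hf hg]

lemma pd_const_sub (c : ℝ) (hf : DifferentiableAt ℝ f x) :
    pd μ (fun y => c - f y) x = -pd μ f x := by
  simp [pd, fderiv_fun_sub (differentiableAt_const c) hf]

lemma pd_mul (hf : DifferentiableAt ℝ f x) (hg : DifferentiableAt ℝ g x) :
    pd μ (fun y => f y * g y) x = pd μ f x * g x + f x * pd μ g x := by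
  simp [pd, fderiv_fun_mul hf hg]; ring

lemma pd_inv (hf : DifferentiableAt ℝ f x) (hx : f x ≠ 0) :
    pd μ (fun y => (f y)⁻¹) x = -pd μ f x / (f x) ^ 2 := by
  have h : HasFDerivAt (fun y => (f y)⁻¹)
      (((ContinuousLinearMap.smulRight (1 : ℝ →L[ℝ] ℝ) (-(f x ^ 2)⁻¹))).comp (fderiv ℝ f x)) x :=
    (hasFDerivAt_inv hx).comp x hf.hasFDerivAt
  rw [pd, h.fderiv]; simp [pd]; ring

lemma pd_contDiff {χ : (Fin 4 → ℝ) → ℝ} (hχ : ContDiff ℝ (⊤ : ℕ∞) χ) (μ : Fin 4) :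
    ContDiff ℝ (⊤ : ℕ∞) (pd μ χ) := by
  have h1 : ContDiff ℝ (⊤ : ℕ∞) (fderiv ℝ χ) := hχ.fderiv_right (by simp)
  exact h1.clm_apply contDiff_const

lemma pd_symm {χ : (Fin 4 → ℝ) → ℝ} (hχ : ContDiff ℝ (⊤ : ℕ∞) χ) (μ ν : Fin 4) (x : Fin 4 → ℝ) :
    pd μ (pd ν χ) x = pd ν (pd μ χ) x := by
  have hd : DifferentiableAt ℝ (fderiv ℝ χ) x :=
    ((hχ.fderiv_right (m := (⊤ : ℕ∞)) (by simp)).differentiable (by simp)) x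
  have hsym : ∀ a b, fderiv ℝ (fderiv ℝ χ) x a b = fderiv ℝ (fderiv ℝ χ) x b a :=
    (hχ.contDiffAt.isSymmSndFDerivAt (by rw [minSmoothness_of_isRCLikeNormedField]; exact WithTop.coe_le_coe.mpr (le_top : (2:ℕ∞) ≤ ⊤)))
  have key : ∀ (σ τ : Fin 4), pd σ (pd τ χ) x
      = fderiv ℝ (fderiv ℝ χ) x (Pi.single σ 1) (Pi.single τ 1) := by
    intro σ τ
    have h : pd σ (pd τ χ) x
        = fderiv ℝ (fun y => (fderiv ℝ χ y) (Pi.single τ 1)) x (Pi.single σ 1) := rfl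
    rw [h, fderiv_clm_apply (u := fun _ => Pi.single τ 1) hd (differentiableAt_const _)]
    simp
  rw [key, key, hsym]

end Helpers

/-- for v_μ = ∂_μχ with positive Minkowski norm N, the dragged metric
ĝ^{μν} = η^{μν} + ((1−N)/N²) v^μ v^ν normalizes v and makes it geodesic. -/
theorem gradient_congruence_geodesic
    (χ : (Fin 4 → ℝ) → ℝ) (hχ : ContDiff ℝ (⊤ : ℕ∞) χ)
    (v : Fin 4 → (Fin 4 → ℝ) → ℝ) (hv : ∀ μ x, v μ x = pd μ χ x)
    -- N := η^{μν} v_μ v_ν > 0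
    (N : (Fin 4 → ℝ) → ℝ)
    (hN : ∀ x, N x = ∑ μ, ∑ ν, η μ ν * v μ x * v ν x)
    (hNpos : ∀ x, 0 < N x)
    -- β := (1 − N)/N²
    (β : (Fin 4 → ℝ) → ℝ) (hβ : ∀ x, β x = (1 - N x) / (N x) ^ 2)
    -- raised components v^μ = η^{μν} v_ν
    (vup : Fin 4 → (Fin 4 → ℝ) → ℝ) (hvup : ∀ μ x, vup μ x = ∑ ν, η μ ν * v ν x)
    -- dragged metric ĝ^{μν} = η^{μν} + β v^μ v^ν and its matrix inverse ĝ_{μν}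
    (ghat gcov : (Fin 4 → ℝ) → Fin 4 → Fin 4 → ℝ)
    (hghat : ∀ x μ ν, ghat x μ ν = η μ ν + β x * vup μ x * vup ν x)
    (hgcov : ∀ x μ ν, ∑ α, ghat x μ α * gcov x α ν = if μ = ν then (1 : ℝ) else 0)
    -- v̂^ν := ĝ^{νρ} v_ρ
    (vhat : Fin 4 → (Fin 4 → ℝ) → ℝ)
    (hvhat : ∀ ν x, vhat ν x = ∑ ρ, ghat x ν ρ * v ρ x) :
    -- (i) v is ĝ-normalized;  (ii) v satisfies the geodesic equation of ĝ
    (∀ x, ∑ μ, ∑ ν, ghat x μ ν * v μ x * v ν x = 1) ∧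
    (∀ x μ, ∑ ν, vhat ν x *
        (pd ν (v μ) x - ∑ ε, christoffel ghat gcov x ε μ ν * v ε x) = 0) := by
  -- basic facts about v
  have hvpd : ∀ i, v i = pd i χ := fun i => funext (hv i)
  have hvC : ∀ i, ContDiff ℝ (⊤ : ℕ∞) (v i) := fun i => (hvpd i) ▸ pd_contDiff hχ i
  have hvD : ∀ i y, DifferentiableAt ℝ (v i) y := fun i y => ((hvC i).differentiable (by simp)) y
  have dsym : ∀ i j y, pd i (v j) y = pd j (v i) y := by
    intro i j y
    rw [hvpd i, hvpd j]
    exact pd_symm hχ i j y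
  -- N explicitly
  have hNfun : N = fun y => v 0 y * v 0 y - v 1 y * v 1 y - v 2 y * v 2 y - v 3 y * v 3 y := by
    funext y; rw [hN]; simp [η, Fin.sum_univ_four]; ring
  have hq : ∀ y, N y = v 0 y * v 0 y - v 1 y * v 1 y - v 2 y * v 2 y - v 3 y * v 3 y := by
    intro y; rw [hNfun]
  have hND : ∀ y, DifferentiableAt ℝ N y := by
    intro y; rw [hNfun]
    exact ((((hvD 0 y).mul (hvD 0 y)).sub ((hvD 1 y).mul (hvD 1 y))).sub
      ((hvD 2 y).mul (hvD 2 y))).sub ((hvD 3 y).mul (hvD 3 y))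
  have hNne : ∀ y, N y ≠ 0 := fun y => (hNpos y).ne'
  -- β relations
  have hβ2 : ∀ y, β y * N y ^ 2 = 1 - N y := by
    intro y; rw [hβ y]; exact div_mul_cancel₀ _ (pow_ne_zero 2 (hNne y))
  -- derivative of N
  have pdN : ∀ c y, pd c N y = 2 * (v 0 y * pd c (v 0) y - v 1 y * pd c (v 1) y
      - v 2 y * pd c (v 2) y - v 3 y * pd c (v 3) y) := by
    intro c y
    rw [hNfun]
    rw [pd_sub ((((hvD 0 y).fun_mul (hvD 0 y)).fun_sub ((hvD 1 y).fun_mul (hvD 1 y))).fun_sub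
          ((hvD 2 y).fun_mul (hvD 2 y))) ((hvD 3 y).fun_mul (hvD 3 y)),
        pd_sub (((hvD 0 y).fun_mul (hvD 0 y)).fun_sub ((hvD 1 y).fun_mul (hvD 1 y)))
          ((hvD 2 y).fun_mul (hvD 2 y)),
        pd_sub ((hvD 0 y).fun_mul (hvD 0 y)) ((hvD 1 y).fun_mul (hvD 1 y)),
        pd_mul (hvD 0 y) (hvD 0 y), pd_mul (hvD 1 y) (hvD 1 y),
        pd_mul (hvD 2 y) (hvD 2 y), pd_mul (hvD 3 y) (hvD 3 y)]
    ring
  -- part (i)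
  have parti : ∀ x, ∑ μ, ∑ ν, ghat x μ ν * v μ x * v ν x = 1 := by
    intro x
    simp only [hghat, hvup, Fin.sum_univ_four]
    simp [η]
    linear_combination (-(1 + β x * ((v 0 x * v 0 x - v 1 x * v 1 x - v 2 x * v 2 x
        - v 3 x * v 3 x) + N x))) * (hq x) + hβ2 x
  refine ⟨parti, ?_⟩
  -- gcov explicitly: right-inverse check
  have hGg : ∀ (y : Fin 4 → ℝ) (ρ σ : Fin 4),
      (∑ α, ghat y ρ α * (η α σ + (1 - (N y)⁻¹) * v α y * v σ y))
        = if ρ = σ then (1:ℝ) else 0 := by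
    intro y ρ σ
    have hK : β y + (1 - (N y)⁻¹) * (1 + β y * N y) = 0 := by
      have hne := hNne y
      rw [hβ y]; field_simp; ring
    fin_cases ρ <;> fin_cases σ <;>
      simp only [hghat, hvup, Fin.sum_univ_four] <;>
      simp [η] <;>
      [linear_combination (((1 : ℝ) * v 0 y * v 0 y) * (β y * (1 - (N y)⁻¹))) * (hq y).symm + ((1 : ℝ) * v 0 y * v 0 y) * hK;
        linear_combination (((1 : ℝ) * v 0 y * v 1 y) * (β y * (1 - (N y)⁻¹))) * (hq y).symm + ((1 : ℝ) * v 0 y * v 1 y) * hK;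
        linear_combination (((1 : ℝ) * v 0 y * v 2 y) * (β y * (1 - (N y)⁻¹))) * (hq y).symm + ((1 : ℝ) * v 0 y * v 2 y) * hK;
        linear_combination (((1 : ℝ) * v 0 y * v 3 y) * (β y * (1 - (N y)⁻¹))) * (hq y).symm + ((1 : ℝ) * v 0 y * v 3 y) * hK;
        linear_combination (((-1 : ℝ) * v 1 y * v 0 y) * (β y * (1 - (N y)⁻¹))) * (hq y).symm + ((-1 : ℝ) * v 1 y * v 0 y) * hK;
        linear_combination (((-1 : ℝ) * v 1 y * v 1 y) * (β y * (1 - (N y)⁻¹))) * (hq y).symm + ((-1 : ℝ) * v 1 y * v 1 y) * hK;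
        linear_combination (((-1 : ℝ) * v 1 y * v 2 y) * (β y * (1 - (N y)⁻¹))) * (hq y).symm + ((-1 : ℝ) * v 1 y * v 2 y) * hK;
        linear_combination (((-1 : ℝ) * v 1 y * v 3 y) * (β y * (1 - (N y)⁻¹))) * (hq y).symm + ((-1 : ℝ) * v 1 y * v 3 y) * hK;
        linear_combination (((-1 : ℝ) * v 2 y * v 0 y) * (β y * (1 - (N y)⁻¹))) * (hq y).symm + ((-1 : ℝ) * v 2 y * v 0 y) * hK;
        linear_combination (((-1 : ℝ) * v 2 y * v 1 y) * (β y * (1 - (N y)⁻¹))) * (hq y).symm + ((-1 : ℝ) * v 2 y * v 1 y) * hK;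
        linear_combination (((-1 : ℝ) * v 2 y * v 2 y) * (β y * (1 - (N y)⁻¹))) * (hq y).symm + ((-1 : ℝ) * v 2 y * v 2 y) * hK;
        linear_combination (((-1 : ℝ) * v 2 y * v 3 y) * (β y * (1 - (N y)⁻¹))) * (hq y).symm + ((-1 : ℝ) * v 2 y * v 3 y) * hK;
        linear_combination (((-1 : ℝ) * v 3 y * v 0 y) * (β y * (1 - (N y)⁻¹))) * (hq y).symm + ((-1 : ℝ) * v 3 y * v 0 y) * hK;
        linear_combination (((-1 : ℝ) * v 3 y * v 1 y) * (β y * (1 - (N y)⁻¹))) * (hq y).symm + ((-1 : ℝ) * v 3 y * v 1 y) * hK;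
        linear_combination (((-1 : ℝ) * v 3 y * v 2 y) * (β y * (1 - (N y)⁻¹))) * (hq y).symm + ((-1 : ℝ) * v 3 y * v 2 y) * hK;
        linear_combination (((-1 : ℝ) * v 3 y * v 3 y) * (β y * (1 - (N y)⁻¹))) * (hq y).symm + ((-1 : ℝ) * v 3 y * v 3 y) * hK]
  have hgcovF : ∀ y ρ σ, gcov y ρ σ = η ρ σ + (1 - (N y)⁻¹) * v ρ y * v σ y := by
    intro y ρ σ
    have hAC : (Matrix.of fun μ ν => ghat y μ ν) * (Matrix.of fun μ ν => gcov y μ ν) = 1 := by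
      ext μ ν
      simpa [Matrix.mul_apply, Matrix.one_apply] using hgcov y μ ν
    have hAG : (Matrix.of fun μ ν => ghat y μ ν) *
        (Matrix.of fun μ ν => η μ ν + (1 - (N y)⁻¹) * v μ y * v ν y) = 1 := by
      ext μ ν
      simpa [Matrix.mul_apply, Matrix.one_apply] using hGg y μ ν
    have hCA : (Matrix.of fun μ ν => gcov y μ ν) * (Matrix.of fun μ ν => ghat y μ ν) = 1 :=
      mul_eq_one_comm.mp hAC
    have hEq : (Matrix.of fun μ ν => gcov y μ ν)
        = (Matrix.of fun μ ν => η μ ν + (1 - (N y)⁻¹) * v μ y * v ν y) := by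
      calc (Matrix.of fun μ ν => gcov y μ ν)
          = (Matrix.of fun μ ν => gcov y μ ν) * 1 := by rw [mul_one]
        _ = (Matrix.of fun μ ν => gcov y μ ν) * ((Matrix.of fun μ ν => ghat y μ ν) *
              (Matrix.of fun μ ν => η μ ν + (1 - (N y)⁻¹) * v μ y * v ν y)) := by rw [hAG]
        _ = ((Matrix.of fun μ ν => gcov y μ ν) * (Matrix.of fun μ ν => ghat y μ ν)) *
              (Matrix.of fun μ ν => η μ ν + (1 - (N y)⁻¹) * v μ y * v ν y) := by
              rw [mul_assoc]
        _ = _ := by rw [hCA, one_mul]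
    exact congrFun (congrFun hEq ρ) σ
  -- derivative of gcov
  have pdGcov : ∀ (c ρ σ : Fin 4) y, pd c (fun z => gcov z ρ σ) y =
      pd c N y / (N y) ^ 2 * (v ρ y * v σ y)
      + (1 - (N y)⁻¹) * (pd c (v ρ) y * v σ y + v ρ y * pd c (v σ) y) := by
    intro c ρ σ y
    have hγD : ∀ y', DifferentiableAt ℝ (fun z => 1 - (N z)⁻¹) y' :=
      fun y' => (differentiableAt_const 1).sub ((hND y').inv (hNne y'))
    have hfun : (fun z => gcov z ρ σ) = fun z => η ρ σ + (1 - (N z)⁻¹) * v ρ z * v σ z :=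
      funext fun z => hgcovF z ρ σ
    rw [hfun, pd_const_add,
        pd_mul ((hγD y).fun_mul (hvD ρ y)) (hvD σ y),
        pd_mul (hγD y) (hvD ρ y),
        pd_const_sub 1 ((hND y).fun_inv (hNne y)),
        pd_inv (hND y) (hNne y)]
    ring
  -- symmetry of ghat and contraction of christoffel with v
  have ηsym : ∀ i j, η i j = η j i := by
    intro i j
    by_cases h : i = j
    · rw [h]
    · simp [η, h, Ne.symm h]
  have hsymg : ∀ y i j, ghat y i j = ghat y j i := by
    intro y i j; rw [hghat, hghat, ηsym]; ring
  have hC : ∀ (x : Fin 4 → ℝ) (μ ν : Fin 4),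
      (∑ ε, christoffel ghat gcov x ε μ ν * v ε x)
        = (1/2) * ∑ ρ, vhat ρ x * (pd ν (fun y => gcov y ρ μ) x
            + pd μ (fun y => gcov y ρ ν) x - pd ρ (fun y => gcov y μ ν) x) := by
    intro x μ ν
    simp only [christoffel, hvhat, Fin.sum_univ_four]
    rw [hsymg x 1 0, hsymg x 2 0, hsymg x 3 0, hsymg x 2 1, hsymg x 3 1, hsymg x 3 2]
    ring
  -- geodesic equation
  intro x μ
  have hninv : N x * (N x)⁻¹ = 1 := mul_inv_cancel₀ (hNne x)
  -- vhat in terms of v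
  have hw0 : vhat 0 x * N x = v 0 x := by
    rw [hvhat]
    simp only [hghat, hvup, Fin.sum_univ_four]
    simp [η]
    linear_combination (v 0 x) * hβ2 x + (-(v 0 x * β x * N x)) * (hq x)
  have hw1 : vhat 1 x * N x = -v 1 x := by
    rw [hvhat]
    simp only [hghat, hvup, Fin.sum_univ_four]
    simp [η]
    linear_combination (-(v 1 x)) * hβ2 x + (v 1 x * β x * N x) * (hq x)
  have hw2 : vhat 2 x * N x = -v 2 x := by
    rw [hvhat]
    simp only [hghat, hvup, Fin.sum_univ_four]
    simp [η]
    linear_combination (-(v 2 x)) * hβ2 x + (v 2 x * β x * N x) * (hq x)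
  have hw3 : vhat 3 x * N x = -v 3 x := by
    rw [hvhat]
    simp only [hghat, hvup, Fin.sum_univ_four]
    simp [η]
    linear_combination (-(v 3 x)) * hβ2 x + (v 3 x * β x * N x) * (hq x)
  -- normalization: ∑ vhat v = 1
  have hA : vhat 0 x * v 0 x + vhat 1 x * v 1 x + vhat 2 x * v 2 x + vhat 3 x * v 3 x = 1 := by
    have h : (vhat 0 x * v 0 x + vhat 1 x * v 1 x + vhat 2 x * v 2 x + vhat 3 x * v 3 x) * N x
        = 1 * N x := by
      linear_combination (v 0 x) * hw0 + (v 1 x) * hw1 + (v 2 x) * hw2 + (v 3 x) * hw3 - hq x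
    exact mul_right_cancel₀ (hNne x) h
  -- ∂_μ N = 2 N x * T
  have hUμ : pd μ N x = 2 * N x * (vhat 0 x * pd μ (v 0) x + vhat 1 x * pd μ (v 1) x
      + vhat 2 x * pd μ (v 2) x + vhat 3 x * pd μ (v 3) x) := by
    rw [pdN μ x]
    linear_combination (-2 * pd μ (v 0) x) * hw0 - (2 * pd μ (v 1) x) * hw1
      - (2 * pd μ (v 2) x) * hw2 - (2 * pd μ (v 3) x) * hw3
  -- assemble
  simp only [hC, pdGcov, Fin.sum_univ_four]
  simp only [dsym 1 0 x, dsym 2 0 x, dsym 3 0 x, dsym 2 1 x, dsym 3 1 x, dsym 3 2 x,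
    dsym 0 μ x, dsym 1 μ x, dsym 2 μ x, dsym 3 μ x]
  linear_combination
    (-((vhat 0 x * pd μ (v 0) x + vhat 1 x * pd μ (v 1) x + vhat 2 x * pd μ (v 2) x
        + vhat 3 x * pd μ (v 3) x)
      * (1 + (vhat 0 x * v 0 x + vhat 1 x * v 1 x + vhat 2 x * v 2 x + vhat 3 x * v 3 x)
          * (N x)⁻¹))) * hA
    + (-((vhat 0 x * v 0 x + vhat 1 x * v 1 x + vhat 2 x * v 2 x + vhat 3 x * v 3 x) ^ 2
        / (2 * (N x) ^ 2))) * hUμ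
    + (-((vhat 0 x * pd μ (v 0) x + vhat 1 x * pd μ (v 1) x + vhat 2 x * pd μ (v 2) x
        + vhat 3 x * pd μ (v 3) x)
      * (vhat 0 x * v 0 x + vhat 1 x * v 1 x + vhat 2 x * v 2 x + vhat 3 x * v 3 x) ^ 2
        * (N x)⁻¹)) * hninv
end
end

section
/- Let v, a ∈ ℝ⁴ with η_{μν}v^μv^ν = 1, η_{μν}a^μv^ν = 0, and set a² := −η_{μν}a^μa^ν. Let b, m, n be real numbers and set D := (1+b)(1 − m a²) + n² a², assumed nonzero. Then the general dragged metric ĝ^{μν} := η^{μν} + b v^μ v^ν + m a^μ a^ν + n (a^μ v^ν + a^ν v^μ) has as its matrix inverse ĝ_{μν} = η_{μν} + B v_μ v_ν + M a_μ a_ν + N (a_μ v_ν + a_ν v_μ), where B = −[ b(1 − m a²) + n² a² ]/D, M = [ n² − m(1+b) ]/D, and N = −n/D. -/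
/-!
Write `V` for the `2 × 4` matrix with rows `v, a` and `C = !![b, n; n, m]`, so that
`ĝ^{μν} = η + Vᵀ C V` and the claimed inverse is `η + η Vᵀ C' V η` with `C' = !![B, N; N, M]`.
Because `η² = 1`, their product is `1 + Vᵀ (C + C' + C K C') V η`, where `K = V η Vᵀ = diag(1, -a²)`
is the Gram matrix of `v, a`. So everything reduces to the `2 × 2` equation `C + C' + C K C' = 0`,
whose solution is `C' = -(1 + C K)⁻¹ C`; here `D = det (1 + C K)`.
-/

open scoped BigOperators

noncomputable section

open Matrix

-- Mathlib's Woodbury identity `Matrix.add_mul_mul_inv_eq_sub` needs `C` invertible,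
-- which fails e.g. for `b = m = n = 0`.
theorem Matrix.lowRankUpdate_mul_eq_one {n k α : Type*} [Fintype n] [Fintype k] [DecidableEq n]
    [Semiring α] {A A' : Matrix n n α} {U : Matrix n k α} {V : Matrix k n α} {C C' : Matrix k k α}
    (hA : A * A' = 1) (hC : C + C' + C * (V * A' * U) * C' = 0) :
    (A + U * C * V) * (A' + A' * U * C' * V * A') = 1 := by
  calc (A + U * C * V) * (A' + A' * U * C' * V * A')
      = A * A' + A * A' * U * C' * V * A' + U * C * V * A'
          + U * C * (V * A' * U) * C' * V * A' := by
        simp only [Matrix.mul_add, Matrix.add_mul, Matrix.mul_assoc]; abel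
    _ = 1 + U * (C + C' + C * (V * A' * U) * C') * V * A' := by
        simp only [hA, Matrix.one_mul, Matrix.mul_add, Matrix.add_mul, Matrix.mul_assoc]; abel
    _ = 1 := by rw [hC]; simp

theorem Matrix.transpose_mul_fin_two_mul_apply {ι R : Type*} [Fintype ι] [CommSemiring R]
    (x y : ι → R) (p q r s : R) (μ ν : ι) :
    ((of ![x, y])ᵀ * !![p, q; r, s] * of ![x, y]) μ ν
      = p * x μ * x ν + q * x μ * y ν + r * y μ * x ν + s * y μ * y ν := by
  simp only [mul_apply, transpose_apply, of_apply, Fin.sum_univ_two, cons_val', cons_val_zero,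
    cons_val_one, cons_val_fin_one, Fin.isValue]
  ring

theorem Matrix.sum_sum_mul_mul_eq_dotProduct_mulVec {ι R : Type*} [Fintype ι] [CommSemiring R]
    (E : Matrix ι ι R) (x y : ι → R) :
    ∑ μ, ∑ ν, E μ ν * x μ * y ν = x ⬝ᵥ (E *ᵥ y) := by
  simp only [dotProduct, mulVec, Finset.mul_sum]
  exact Finset.sum_congr rfl fun _ _ => Finset.sum_congr rfl fun _ _ => by ring

theorem Matrix.mul_transpose_of_fin_two {ι R : Type*} [Fintype ι] [NonUnitalNonAssocSemiring R]
    (E : Matrix ι ι R) (x y : ι → R) : E * (of ![x, y])ᵀ = (of ![E *ᵥ x, E *ᵥ y])ᵀ := by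
  ext μ i; fin_cases i <;> rfl

theorem Matrix.of_fin_two_mul_mul_transpose {ι R : Type*} [Fintype ι] [NonUnitalSemiring R]
    (E : Matrix ι ι R) (x y : ι → R) :
    of ![x, y] * E * (of ![x, y])ᵀ
      = !![x ⬝ᵥ (E *ᵥ x), x ⬝ᵥ (E *ᵥ y); y ⬝ᵥ (E *ᵥ x), y ⬝ᵥ (E *ᵥ y)] := by
  rw [Matrix.mul_assoc, mul_transpose_of_fin_two]
  ext i j; fin_cases i <;> fin_cases j <;> rfl

theorem η_transpose : (of η)ᵀ = of η := by
  ext μ ν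
  simp only [transpose_apply, of_apply, η]
  split_ifs <;> simp_all

theorem η_mul_η : of η * of η = 1 := by
  ext μ ν
  fin_cases μ <;> fin_cases ν <;> simp [Matrix.mul_apply, η]

theorem dotProduct_η_mulVec_comm (x y : Fin 4 → ℝ) : x ⬝ᵥ (of η *ᵥ y) = y ⬝ᵥ (of η *ᵥ x) := by
  rw [dotProduct_mulVec, ← mulVec_transpose, η_transpose, dotProduct_comm]

theorem dragged_coeffs_add_add_mul_mul_eq_zero {b m n a2 D B M N : ℝ}
    (hD : D = (1 + b) * (1 - m * a2) + n ^ 2 * a2) (hD0 : D ≠ 0)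
    (hB : B = -(b * (1 - m * a2) + n ^ 2 * a2) / D) (hM : M = (n ^ 2 - m * (1 + b)) / D)
    (hN : N = -n / D) :
    !![b, n; n, m] + !![B, N; N, M] + !![b, n; n, m] * !![1, 0; 0, -a2] * !![B, N; N, M] = 0 := by
  subst hB hM hN
  rw [mul_fin_two, mul_fin_two]
  ext i j
  fin_cases i <;> fin_cases j <;>
    simp only [Matrix.add_apply, Matrix.zero_apply, of_apply, cons_val', cons_val_zero,
      cons_val_one, cons_val_fin_one, Fin.zero_eta, Fin.mk_one, Fin.isValue] <;>
    field_simp <;> rw [hD] <;> ring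

/-- the general dragged metric
ĝ^{μν} = η^{μν} + b v^μv^ν + m a^μa^ν + n(a^μv^ν + a^νv^μ) has the stated matrix inverse. -/
theorem general_dragged_metric_inverse
    (v a : Fin 4 → ℝ) (b m n a2 D B M N : ℝ)
    (hvn : ∑ μ, ∑ ν, η μ ν * v μ * v ν = 1)
    (hav : ∑ μ, ∑ ν, η μ ν * a μ * v ν = 0)
    (ha2 : a2 = -∑ μ, ∑ ν, η μ ν * a μ * a ν)
    (hD : D = (1 + b) * (1 - m * a2) + n ^ 2 * a2)
    (hD0 : D ≠ 0)
    -- lowered components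
    (vlow alow : Fin 4 → ℝ)
    (hvlow : ∀ μ, vlow μ = ∑ ν, η μ ν * v ν)
    (halow : ∀ μ, alow μ = ∑ ν, η μ ν * a ν)
    -- coefficients of the inverse
    (hB : B = -(b * (1 - m * a2) + n ^ 2 * a2) / D)
    (hM : M = (n ^ 2 - m * (1 + b)) / D)
    (hN : N = -n / D)
    -- the metric and its claimed inverse
    (gup gdown : Fin 4 → Fin 4 → ℝ)
    (hgup : ∀ μ ν, gup μ ν =
      η μ ν + b * v μ * v ν + m * a μ * a ν + n * (a μ * v ν + a ν * v μ))
    (hgdown : ∀ μ ν, gdown μ ν =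
      η μ ν + B * vlow μ * vlow ν + M * alow μ * alow ν
        + N * (alow μ * vlow ν + alow ν * vlow μ)) :
    ∀ μ ν, ∑ α, gup μ α * gdown α ν = if μ = ν then (1 : ℝ) else 0 := by
  set V : Matrix (Fin 2) (Fin 4) ℝ := of ![v, a]
  have hvlow' : of η *ᵥ v = vlow := (funext hvlow).symm
  have halow' : of η *ᵥ a = alow := (funext halow).symm
  have hlow : of η * Vᵀ = (of ![vlow, alow])ᵀ := by
    rw [mul_transpose_of_fin_two, hvlow', halow']
  have hlow' : V * of η = of ![vlow, alow] := by
    rw [← transpose_transpose (V * of η), transpose_mul, η_transpose, hlow, transpose_transpose]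
  have hgram : V * of η * Vᵀ = !![1, 0; 0, -a2] := by
    rw [of_fin_two_mul_mul_transpose, dotProduct_η_mulVec_comm v a]
    simp only [← sum_sum_mul_mul_eq_dotProduct_mulVec, of_apply]
    rw [hvn, hav, ha2, neg_neg]
  have hG : of gup = of η + Vᵀ * !![b, n; n, m] * V := by
    ext μ ν
    rw [Matrix.add_apply, transpose_mul_fin_two_mul_apply, of_apply, of_apply, hgup]
    ring
  have hH : of gdown = of η + of η * Vᵀ * !![B, N; N, M] * V * of η := by
    rw [Matrix.mul_assoc _ V, hlow, hlow']
    ext μ ν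
    rw [Matrix.add_apply, transpose_mul_fin_two_mul_apply, of_apply, of_apply, hgdown]
    ring
  have hprod := lowRankUpdate_mul_eq_one η_mul_η
    (hgram ▸ dragged_coeffs_add_add_mul_mul_eq_zero hD hD0 hB hM hN)
  intro μ ν
  simpa [← hG, ← hH, mul_apply, one_apply] using congrFun (congrFun hprod μ) ν
end
end
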